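/- arXiv:2006.11126 — 3 statements merged into one kernel-verified Lean document; each statement's English description precedes it below -/
import Mathlib

section
/- Let U = (U_1,…,U_d) be a d-tuple of numeration systems and A ⊂ ℤ^d a finite alphabet, and let N be a trim deterministic finite automaton (every state is accessible from the initial state and co-accessible to a final state) accepting the language {(u,v) ∈ (A × (A_U ∪ −A_U))* : v ∈ 0*ν_U(u)}. Then for any two states q and q' of N and any letter a ∈ A, there exists at most one letter b ∈ A_U ∪ −A_U such that the transition of N from q reading (a,b) leads to q'. -/
open scoped Classical

/-- A numeration system: a strictly increasing sequence of positive integers with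
`U 0 = 1` and bounded quotients `U (i+1) / U i`. -/
structure NumSys where
  U : ℕ → ℕ
  pos : ∀ i, 0 < U i
  base : U 0 = 1
  mono : StrictMono U
  bdd : ∃ C : ℕ, ∀ i, U (i + 1) ≤ C * U i

/-- The value `val_U` of a word `a_ℓ ⋯ a_0` over `ℤ` (most significant digit first):
`Σ_{i=0}^ℓ a_i U(i)`. -/
def valU (N : NumSys) (w : List ℤ) : ℤ :=
  ∑ i ∈ Finset.range w.length, w.reverse.getD i 0 * (N.U i : ℤ)

/-- `w` is the greedy `U`-representation of `n`: its value is `n`, its digits are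
nonnegative, its leading digit is nonzero, and every suffix `a_j ⋯ a_0` satisfies
`Σ_{i=0}^j a_i U(i) < U(j+1)`.  (For `n = 0` this forces `w = ε`.) -/
def IsGreedy (N : NumSys) (n : ℕ) (w : List ℤ) : Prop :=
  valU N w = (n : ℤ) ∧ (∀ a ∈ w, 0 ≤ a) ∧ w.head? ≠ some 0 ∧
    ∀ j, j < w.length → valU N (w.drop (w.length - (j + 1))) < (N.U (j + 1) : ℤ)

/-- The greedy `U`-representation `rep_U n` (the unique word satisfying `IsGreedy`). -/
noncomputable def repU (N : NumSys) (n : ℕ) : List ℤ :=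
  if h : ∃ w, IsGreedy N n w then h.choose else []

/-- `⌈sup_i U(i+1)/U(i)⌉`. -/
noncomputable def capU (N : NumSys) : ℤ :=
  ⌈⨆ i : ℕ, (N.U (i + 1) : ℝ) / (N.U i : ℝ)⌉

/-- The canonical alphabet `A_U = {0, …, ⌈sup_i U(i+1)/U(i)⌉ - 1}`. -/
noncomputable def alphU (N : NumSys) : Set ℤ := Set.Icc 0 (capU N - 1)

/-- The extended normalization `ν_U`: `rep_U(val_U w)` if `val_U w ≥ 0`, and the
digitwise negation of `rep_U(-val_U w)` otherwise. -/
noncomputable def normExt (N : NumSys) (w : List ℤ) : List ℤ :=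
  if 0 ≤ valU N w then repU N (valU N w).toNat
  else (repU N (-valU N w).toNat).map (fun a => -a)

/-- The `j`-th component word of a word over `ℤ^d`. -/
def comp {d : ℕ} (w : List (Fin d → ℤ)) (j : Fin d) : List ℤ := w.map (fun x => x j)

/-- Pad a word over `ℤ` with leading zeroes to length `L`. -/
def padZero (L : ℕ) (w : List ℤ) : List ℤ := List.replicate (L - w.length) 0 ++ w

/-- The `d`-dimensional extended normalization `ν_U`: the componentwise normalizations,
padded with leading zeroes to a common length. -/
noncomputable def normVec {d : ℕ} (Ns : Fin d → NumSys) (w : List (Fin d → ℤ)) :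
    List (Fin d → ℤ) :=
  (List.range (Finset.univ.sup fun j => (normExt (Ns j) (comp w j)).length)).map
    (fun i => fun j =>
      (padZero (Finset.univ.sup fun j' => (normExt (Ns j') (comp w j')).length)
        (normExt (Ns j) (comp w j))).getD i 0)

/-- The delay `d_U(w) = |ν_U(w)| - |w|`. -/
noncomputable def delayVec {d : ℕ} (Ns : Fin d → NumSys) (w : List (Fin d → ℤ)) : ℤ :=
  ((normVec Ns w).length : ℤ) - (w.length : ℤ)

/-- The product alphabet `A_U = A_{U_1} × ⋯ × A_{U_d}`. -/
noncomputable def alphProd {d : ℕ} (Ns : Fin d → NumSys) : Set (Fin d → ℤ) :=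
  {b | ∀ j, b j ∈ alphU (Ns j)}

/-- The alphabet `A_U ∪ -A_U`. -/
noncomputable def symAlph {d : ℕ} (Ns : Fin d → NumSys) : Set (Fin d → ℤ) :=
  {b | ∀ j, b j ∈ alphU (Ns j)} ∪ {b | ∀ j, -b j ∈ alphU (Ns j)}

/-- The language `{(u,v) ∈ (A × (A_U ∪ -A_U))* : v ∈ 0* ν_U(u)}`, where a word over
pairs is identified with the pair of its component words. -/
noncomputable def NormLangVec {d : ℕ} (Ns : Fin d → NumSys) (A : Set (Fin d → ℤ)) :
    Language ((Fin d → ℤ) × (Fin d → ℤ)) :=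
  {p | (∀ x ∈ p, x.1 ∈ A ∧ x.2 ∈ symAlph Ns) ∧
    ∃ k : ℕ, p.map Prod.snd =
      List.replicate k (0 : Fin d → ℤ) ++ normVec Ns (p.map Prod.fst)}

/-- A deterministic finite automaton with (possibly) partial transition function. -/
structure PDFA (α : Type) (σ : Type) where
  step : σ → α → Option σ
  start : σ
  accept : Set σ

/-- The state (if any) reached from `q` after reading `w`. -/
def PDFA.evalFrom {α σ : Type} (M : PDFA α σ) (q : σ) (w : List α) : Option σ :=
  w.foldl (fun o a => o.bind fun p => M.step p a) (some q)

/-- The language accepted by a partial DFA. -/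
def PDFA.accepts {α σ : Type} (M : PDFA α σ) : Language α :=
  {w | ∃ q ∈ M.accept, M.evalFrom M.start w = some q}

/-- A partial DFA is trim if every state is accessible from the initial state and
co-accessible to some final state. -/
def PDFA.Trim {α σ : Type} (M : PDFA α σ) : Prop :=
  ∀ q : σ, (∃ w, M.evalFrom M.start w = some q) ∧
    (∃ w, ∃ p ∈ M.accept, M.evalFrom q w = some p)


private lemma pdfa_foldl_none {α σ : Type} (M : PDFA α σ) (ys : List α) :
    ys.foldl (fun o a => o.bind fun p => M.step p a) none = none := by
  induction ys <;> simp [*]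

private lemma pdfa_evalFrom_append {α σ : Type} (M : PDFA α σ) (q : σ) (xs ys : List α) :
    M.evalFrom q (xs ++ ys) = (M.evalFrom q xs).bind (fun p => M.evalFrom p ys) := by
  unfold PDFA.evalFrom
  rw [List.foldl_append]
  cases hx : List.foldl (fun o a => o.bind fun p => M.step p a) (some q) xs with
  | none => simp [pdfa_foldl_none]
  | some p => simp

/-- Let `U = (U_1, …, U_d)` be a `d`-tuple of numeration systems and `A ⊂ ℤ^d` a
finite alphabet, and let `M` be a trim deterministic finite automaton accepting the
language `{(u,v) ∈ (A × (A_U ∪ -A_U))* : v ∈ 0* ν_U(u)}`.  Then for any two states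
`q, q'` of `M` and any letter `a ∈ A`, there is at most one letter
`b ∈ A_U ∪ -A_U` such that the transition of `M` from `q` reading `(a, b)` leads
to `q'`. -/
theorem normalizer_transition_unique {d : ℕ} (Ns : Fin d → NumSys)
    (A : Set (Fin d → ℤ)) (hA : A.Finite)
    (Q : Type) [Fintype Q] (M : PDFA ((Fin d → ℤ) × (Fin d → ℤ)) Q)
    (hacc : M.accepts = NormLangVec Ns A) (htrim : M.Trim) :
    ∀ (q q' : Q) (a : Fin d → ℤ), a ∈ A →
      ∀ b₁ b₂ : Fin d → ℤ, b₁ ∈ symAlph Ns → b₂ ∈ symAlph Ns →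
        M.step q (a, b₁) = some q' → M.step q (a, b₂) = some q' → b₁ = b₂ := by
  intro q q' a ha b₁ b₂ hb₁ hb₂ h₁ h₂
  obtain ⟨w₁, hw₁⟩ := (htrim q).1
  obtain ⟨w₂, p, hp, hw₂⟩ := (htrim q').2
  have acc : ∀ b, M.step q (a, b) = some q' → (w₁ ++ (a, b) :: w₂) ∈ M.accepts := by
    intro b hb
    refine ⟨p, hp, ?_⟩
    rw [pdfa_evalFrom_append, hw₁]
    show M.evalFrom q ((a, b) :: w₂) = some p
    unfold PDFA.evalFrom
    simp only [List.foldl_cons, Option.bind, hb]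
    exact hw₂
  have m₁ := acc b₁ h₁
  have m₂ := acc b₂ h₂
  rw [hacc] at m₁ m₂
  obtain ⟨-, k₁, e₁⟩ := m₁
  obtain ⟨-, k₂, e₂⟩ := m₂
  simp only [List.map_append, List.map_cons] at e₁ e₂
  have hk : k₁ = k₂ := by
    have l₁ := congrArg List.length e₁
    have l₂ := congrArg List.length e₂
    simp only [List.length_append, List.length_cons, List.length_replicate,
      List.length_map] at l₁ l₂
    omega
  rw [hk] at e₁
  have := e₁.trans e₂.symm
  have := List.append_cancel_left this
  exact (List.cons_eq_cons.mp this).1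
end

section
/- Let U = (U_1,…,U_d) be a d-tuple of numeration systems such that each numeration language rep_{U_j}(ℕ) is regular, and let K be a semiring. If there exists a K-recognizable series S : A_U* → K such that (S, rep_U(n)) = f(n) for every n ∈ ℕ^d, then f is (U,K)-regular, i.e., the series Σ_{n∈ℕ^d} f(n) rep_U(n) is K-recognizable. -/
open scoped Classical

/-- The zero-padded `d`-tuple of greedy representations `rep_U(n)`, as a word over `ℤ^d`. -/
noncomputable def repVec {d : ℕ} (Ns : Fin d → NumSys) (n : Fin d → ℕ) :
    List (Fin d → ℤ) :=
  (List.range (Finset.univ.sup fun j => (repU (Ns j) (n j)).length)).map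
    (fun i => fun j =>
      (padZero (Finset.univ.sup fun j' => (repU (Ns j') (n j')).length)
        (repU (Ns j) (n j))).getD i 0)

/-- A formal series, given as a function on all words over `α`, is `K`-recognizable
over the alphabet `A ⊆ α` if there are `r ≥ 1`, a row vector `λ`, a matrix-valued
map `μ` on letters (extended to a monoid morphism on words by taking products), and
a column vector `γ` with `(S, w) = λ μ(w) γ` for every word `w` over `A`. -/
def KRecOn {K : Type} [Semiring K] {α : Type} (A : Set α) (S : List α → K) : Prop :=
  ∃ r : ℕ, 0 < r ∧
    ∃ (lam : Matrix (Fin 1) (Fin r) K) (mu : α → Matrix (Fin r) (Fin r) K)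
      (gam : Matrix (Fin r) (Fin 1) K),
      ∀ w : List α, (∀ x ∈ w, x ∈ A) → S w = (lam * (w.map mu).prod * gam) 0 0

/-- The series `G_f = Σ_{n ∈ ℕ^d} f(n) rep_U(n)`: the coefficient of a word `w` is
`f(n)` if `w = rep_U(n)` for some `n ∈ ℕ^d`, and `0` otherwise. -/
noncomputable def seriesG {d : ℕ} (Ns : Fin d → NumSys) {K : Type} [Semiring K]
    (f : (Fin d → ℕ) → K) : List (Fin d → ℤ) → K :=
  fun w =>
    if w = repVec Ns (fun j => (valU (Ns j) (comp w j)).toNat) then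
      f (fun j => (valU (Ns j) (comp w j)).toNat)
    else 0

-- auxiliary lemmas, part 1
section ValRep

variable (N : NumSys)

lemma valU_nil : valU N [] = 0 := by simp [valU]

lemma getD_nonneg {l : List ℤ} (h : ∀ x ∈ l, 0 ≤ x) (i : ℕ) : 0 ≤ l.getD i 0 := by
  rcases lt_or_ge i l.length with hi | hi
  · rw [List.getD_eq_getElem _ _ hi]; exact h _ (List.getElem_mem hi)
  · rw [List.getD_eq_default _ _ hi]

lemma valU_replicate_zero_append (k : ℕ) (v : List ℤ) :
    valU N (List.replicate k 0 ++ v) = valU N v := by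
  unfold valU
  rw [List.length_append, List.reverse_append, List.reverse_replicate, List.length_replicate,
    add_comm, Finset.sum_range_add]
  have h1 : ∀ i ∈ Finset.range v.length,
      (v.reverse ++ List.replicate k (0:ℤ)).getD i 0 * (N.U i : ℤ)
        = v.reverse.getD i 0 * (N.U i : ℤ) := by
    intro i hi
    rw [List.getD_append]
    simpa using Finset.mem_range.mp hi
  rw [Finset.sum_congr rfl h1]
  have h2 : ∀ i ∈ Finset.range k,
      (v.reverse ++ List.replicate k (0:ℤ)).getD (v.length + i) 0 * (N.U (v.length + i) : ℤ)
        = 0 := by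
    intro i hi
    have : (v.reverse ++ List.replicate k (0:ℤ)).getD (v.length + i) 0 = 0 := by
      rw [List.getD_eq_getElem?_getD, List.getElem?_append_right (by simp)]
      rcases lt_or_ge i k with h | h
      · simp [List.getElem?_replicate, h]
      · rw [List.getElem?_eq_none (by simp; omega)]; rfl
    rw [this]; ring
  rw [Finset.sum_congr rfl h2]
  simp

lemma valU_pos {a : ℤ} {t : List ℤ} (h0 : ∀ x ∈ a :: t, 0 ≤ x) (ha : a ≠ 0) :
    0 < valU N (a :: t) := by
  unfold valU
  apply Finset.sum_pos'
  · intro i _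
    apply mul_nonneg
    · apply getD_nonneg
      intro x hx
      exact h0 x (by simpa using List.mem_reverse.mp hx)
    · positivity
  · refine ⟨t.length, by simp, ?_⟩
    have hget : (a :: t).reverse.getD t.length 0 = a := by
      rw [List.reverse_cons, List.getD_eq_getElem?_getD,
        List.getElem?_append_right (by simp)]
      simp
    rw [hget]
    have ha1 : 1 ≤ a := lt_of_le_of_ne (h0 a (by simp)) (Ne.symm ha)
    have hU : (0:ℤ) < (N.U t.length : ℤ) := by exact_mod_cast N.pos t.length
    nlinarith

lemma isGreedy_nil : IsGreedy N 0 [] := by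
  refine ⟨by simp [valU], by simp, by simp, by simp⟩

lemma isGreedy_zero_eq_nil {w : List ℤ} (h : IsGreedy N 0 w) : w = [] := by
  rcases w with _ | ⟨a, t⟩
  · rfl
  · exfalso
    obtain ⟨hval, hnn, hhead, -⟩ := h
    have ha : a ≠ 0 := by simpa using hhead
    have h2 := valU_pos N hnn ha
    rw [hval] at h2
    simp at h2

lemma repU_zero : repU N 0 = [] := by
  have hex : ∃ w, IsGreedy N 0 w := ⟨[], isGreedy_nil N⟩
  rw [repU, dif_pos hex]
  exact isGreedy_zero_eq_nil N hex.choose_spec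

lemma repU_head? (n : ℕ) : (repU N n).head? ≠ some 0 := by
  rw [repU]
  split
  · exact (Exists.choose_spec ‹∃ w, IsGreedy N n w›).2.2.1
  · simp

lemma repU_consistent (n : ℕ) :
    repU N ((valU N (repU N n)).toNat) = repU N n := by
  by_cases hex : ∃ w, IsGreedy N n w
  · have hval : valU N (repU N n) = (n : ℤ) := by
      rw [repU, dif_pos hex]; exact hex.choose_spec.1
    rw [hval, Int.toNat_natCast]
  · have h1 : repU N n = [] := by rw [repU, dif_neg hex]
    rw [h1, valU_nil]
    simpa using repU_zero N

end ValRep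
section Lists

lemma map_range_getD (L : ℕ) (l : List ℤ) (h : l.length = L) :
    (List.range L).map (fun i => l.getD i 0) = l := by
  subst h
  apply List.ext_getElem (by simp)
  intro i h1 h2
  simp only [List.getElem_map, List.getElem_range]
  rw [List.getD_eq_getElem _ _ (by simpa using h1)]

lemma comp_cons {d : ℕ} (a : Fin d → ℤ) (t : List (Fin d → ℤ)) (j : Fin d) :
    comp (a :: t) j = a j :: comp t j := rfl

lemma comp_length {d : ℕ} (w : List (Fin d → ℤ)) (j : Fin d) :
    (comp w j).length = w.length := by simp [comp]

lemma reconstruct {d : ℕ} (w : List (Fin d → ℤ)) :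
    (List.range w.length).map (fun i => fun j => (comp w j).getD i 0) = w := by
  apply List.ext_getElem (by simp)
  intro i h1 h2
  simp only [List.getElem_map, List.getElem_range]
  funext j
  rw [List.getD_eq_getElem _ _ (by simpa [comp] using h2)]
  simp [comp]

lemma padZero_length (L : ℕ) (l : List ℤ) (h : l.length ≤ L) :
    (padZero L l).length = L := by
  simp [padZero]; omega

lemma comp_repVec {d : ℕ} (Ns : Fin d → NumSys) (n : Fin d → ℕ) (j : Fin d) :
    comp (repVec Ns n) j
      = padZero (Finset.univ.sup fun j' => (repU (Ns j') (n j')).length)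
          (repU (Ns j) (n j)) := by
  set L := Finset.univ.sup fun j' => (repU (Ns j') (n j')).length with hL
  have hle : (repU (Ns j) (n j)).length ≤ L := by
    rw [hL]
    exact Finset.le_sup (f := fun j' => (repU (Ns j') (n j')).length) (Finset.mem_univ j)
  have hlen : (padZero L (repU (Ns j) (n j))).length = L := padZero_length _ _ hle
  rw [repVec, comp, List.map_map]
  rw [← hL]
  have : (fun i => (fun i' => fun j' =>
      (padZero L (repU (Ns j') (n j'))).getD i' 0) i j)
      = fun i => (padZero L (repU (Ns j) (n j))).getD i 0 := rfl
  calc (List.range L).map _ = (List.range L).map (fun i => (padZero L (repU (Ns j) (n j))).getD i 0) := rfl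
    _ = padZero L (repU (Ns j) (n j)) := map_range_getD L _ hlen

lemma repVec_length {d : ℕ} (Ns : Fin d → NumSys) (n : Fin d → ℕ) :
    (repVec Ns n).length = Finset.univ.sup fun j' => (repU (Ns j') (n j')).length := by
  simp [repVec]

lemma headI_comp {d : ℕ} (w : List (Fin d → ℤ)) (hw : w ≠ []) (j : Fin d) :
    (comp w j).headI = w.headI j := by
  rcases w with _ | ⟨a, t⟩
  · exact absurd rfl hw
  · rfl

end Lists
section Char

lemma repU_ne_nil_headI {N : NumSys} {n : ℕ} (h : repU N n ≠ []) : (repU N n).headI ≠ 0 := by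
  intro h0
  apply repU_head? N n
  rcases hr : repU N n with _ | ⟨b, u⟩
  · exact absurd hr h
  · rw [hr, List.headI] at h0
    rw [h0]
    rfl

lemma repVec_char {d : ℕ} (Ns : Fin d → NumSys) (w : List (Fin d → ℤ)) :
    w = repVec Ns (fun j => (valU (Ns j) (comp w j)).toNat) ↔
      ((∀ j, ∃ k m, comp w j = List.replicate k 0 ++ repU (Ns j) m) ∧
       (w = [] ∨ ∃ j, w.headI j ≠ 0)) := by
  set n : Fin d → ℕ := fun j => (valU (Ns j) (comp w j)).toNat with hn
  constructor
  · intro h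
    have hcomp : ∀ j, comp w j
        = List.replicate ((Finset.univ.sup fun j' => (repU (Ns j') (n j')).length)
            - (repU (Ns j) (n j)).length) 0 ++ repU (Ns j) (n j) := by
      intro j
      conv_lhs => rw [h]
      exact comp_repVec Ns n j
    refine ⟨fun j => ⟨_, n j, hcomp j⟩, ?_⟩
    rcases eq_or_ne w [] with hw | hw
    · exact Or.inl hw
    · right
      set L := Finset.univ.sup fun j' => (repU (Ns j') (n j')).length with hL
      have hlen : w.length = L := by rw [h]; exact repVec_length Ns n
      have hLpos : 0 < L := by rw [← hlen]; exact List.length_pos_iff.mpr hw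
      have hne : Nonempty (Fin d) := by
        by_contra hne
        rw [not_nonempty_iff] at hne
        have : L = 0 := by rw [hL, Finset.univ_eq_empty]; simp
        omega
      obtain ⟨j₀, -, hj₀⟩ := Finset.exists_mem_eq_sup Finset.univ Finset.univ_nonempty
        (fun j' => (repU (Ns j') (n j')).length)
      refine ⟨j₀, ?_⟩
      rw [← hL] at hj₀
      have hc := hcomp j₀
      rw [← hj₀, Nat.sub_self, List.replicate_zero, List.nil_append] at hc
      rw [← headI_comp w hw j₀, hc]
      apply repU_ne_nil_headI
      rw [← List.length_pos_iff_ne_nil, ← hj₀]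
      omega
  · rintro ⟨h1, h2⟩
    choose k m hkm using h1
    have hrep : ∀ j, repU (Ns j) (n j) = repU (Ns j) (m j) := by
      intro j
      rw [hn]
      simp only
      rw [hkm j, valU_replicate_zero_append, repU_consistent]
    rcases eq_or_ne w [] with hw | hwne
    · subst hw
      have hz : ∀ j, n j = 0 := by
        intro j
        rw [hn]
        simp [comp, valU_nil]
      have hsup : (Finset.univ.sup fun j' => (repU (Ns j') (n j')).length) = 0 :=
        Nat.le_zero.mp (Finset.sup_le fun j _ => by rw [hz j, repU_zero]; simp)
      rw [repVec, hsup]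
      simp
    · obtain ⟨j₀, hj₀⟩ := h2.resolve_left hwne
      have hklen : ∀ j, w.length = k j + (repU (Ns j) (m j)).length := by
        intro j
        rw [← comp_length w j, hkm j]
        simp
      have hk0 : k j₀ = 0 := by
        by_contra h0
        obtain ⟨kk, hkk⟩ := Nat.exists_eq_succ_of_ne_zero h0
        have hc := hkm j₀
        rw [hkk] at hc
        have hh : (comp w j₀).headI = 0 := by rw [hc]; simp [List.replicate_succ]
        rw [headI_comp w hwne j₀] at hh
        exact hj₀ hh
      have hlj₀ : (repU (Ns j₀) (m j₀)).length = w.length := by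
        have := hklen j₀
        omega
      rw [repVec]
      set L := Finset.univ.sup fun j' => (repU (Ns j') (n j')).length with hL
      have hsup : L = w.length := by
        apply le_antisymm
        · apply Finset.sup_le
          intro j _
          rw [hrep j]
          have := hklen j
          omega
        · rw [← hlj₀, ← hrep j₀, hL]
          exact Finset.le_sup (f := fun j' => (repU (Ns j') (n j')).length)
            (Finset.mem_univ j₀)
      have hpad : ∀ j, padZero L (repU (Ns j) (n j)) = comp w j := by
        intro j
        rw [padZero, hrep j, hsup, hkm j]
        have : w.length - (repU (Ns j) (m j)).length = k j := by
          have := hklen j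
          omega
        rw [this]
      have hfun : (fun i => fun j => (padZero L (repU (Ns j) (n j))).getD i 0)
          = fun i => fun j => (comp w j).getD i 0 := by
        funext i j
        rw [hpad j]
      rw [hfun, hsup]
      exact (reconstruct w).symm

end Char
section Automata

/-- Strip leading zeroes automaton for `0* R` where no word of `R` starts with `0`. -/
def stripDFA {σ : Type} (M : DFA ℤ σ) : DFA ℤ (Option σ) where
  step s a := match s with
    | none => if a = 0 then none else some (M.step M.start a)
    | some t => some (M.step t a)
  start := none
  accept := {s | match s with
    | none => [] ∈ M.accepts
    | some t => t ∈ M.accept}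

lemma stripDFA_evalFrom_some {σ : Type} (M : DFA ℤ σ) (t : σ) (v : List ℤ) :
    (stripDFA M).evalFrom (some t) v = some (M.evalFrom t v) := by
  induction v generalizing t with
  | nil => rfl
  | cons a v ih => exact ih (M.step t a)

lemma stripDFA_accepts (N : NumSys) {σ : Type} (M : DFA ℤ σ)
    (hM : M.accepts = {w : List ℤ | ∃ n : ℕ, repU N n = w}) (w : List ℤ) :
    ((stripDFA M).evalFrom none w ∈ (stripDFA M).accept
      ↔ ∃ k m, w = List.replicate k 0 ++ repU N m) := by
  induction w with
  | nil =>
    simp only [DFA.evalFrom_nil]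
    constructor
    · intro _
      exact ⟨0, 0, by simp [repU_zero]⟩
    · intro _
      show [] ∈ M.accepts
      rw [hM]
      exact ⟨0, repU_zero N⟩
  | cons a v ih =>
    by_cases ha : a = 0
    · subst ha
      have hstep : (stripDFA M).evalFrom none ((0:ℤ) :: v) = (stripDFA M).evalFrom none v := by
        rfl
      rw [hstep, ih]
      constructor
      · rintro ⟨k, m, rfl⟩
        exact ⟨k + 1, m, by simp [List.replicate_succ]⟩
      · rintro ⟨k, m, hkm⟩
        rcases k with _ | k
        · exfalso
          simp only [List.replicate_zero, List.nil_append] at hkm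
          apply repU_head? N m
          rw [← hkm]
          rfl
        · refine ⟨k, m, ?_⟩
          rw [List.replicate_succ, List.cons_append] at hkm
          exact (List.cons_injective.eq_iff.mp hkm)
    · have hstep : (stripDFA M).evalFrom none (a :: v)
          = (stripDFA M).evalFrom (some (M.step M.start a)) v := by
        show (stripDFA M).evalFrom ((stripDFA M).step none a) v = _
        congr 1
        simp [stripDFA, ha]
      rw [hstep, stripDFA_evalFrom_some]
      have : (some (M.evalFrom (M.step M.start a) v) ∈ (stripDFA M).accept)
          ↔ M.evalFrom (M.step M.start a) v ∈ M.accept := Iff.rfl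
      rw [this]
      have hacc : (M.evalFrom (M.step M.start a) v ∈ M.accept) ↔ (a :: v) ∈ M.accepts := by
        rw [DFA.mem_accepts]
        rfl
      rw [hacc, hM]
      constructor
      · rintro ⟨n, hn⟩
        exact ⟨0, n, by simp [hn]⟩
      · rintro ⟨k, m, hkm⟩
        rcases k with _ | k
        · simp only [List.replicate_zero, List.nil_append] at hkm
          exact ⟨m, hkm.symm⟩
        · exfalso
          rw [List.replicate_succ, List.cons_append] at hkm
          have := (List.cons.injEq a v 0 (List.replicate k 0 ++ repU N m)).mp hkm
          exact ha this.1

end Automata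
section BigDFA

variable {d : ℕ} (σf : Fin d → Type) (Mf : ∀ j, DFA ℤ (σf j))

/-- Product automaton recognizing the padded representations. -/
noncomputable def bigDFA : DFA (Fin d → ℤ) ((∀ j, Option (σf j)) × Option Bool) where
  step s b := (fun j => (stripDFA (Mf j)).step (s.1 j) (b j),
    some (s.2.getD (if ∃ j, b j ≠ 0 then true else false)))
  start := (fun _ => none, none)
  accept := {p | (∀ j, p.1 j ∈ (stripDFA (Mf j)).accept) ∧ p.2 ≠ some false}

lemma bigDFA_evalFrom_fst (w : List (Fin d → ℤ)) (s : ∀ j, Option (σf j)) (fl : Option Bool) :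
    ((bigDFA σf Mf).evalFrom (s, fl) w).1
      = fun j => (stripDFA (Mf j)).evalFrom (s j) (comp w j) := by
  induction w generalizing s fl with
  | nil => rfl
  | cons b t ih =>
    show ((bigDFA σf Mf).evalFrom ((bigDFA σf Mf).step (s, fl) b) t).1 = _
    rw [ih]
    rfl

lemma bigDFA_evalFrom_snd_some (w : List (Fin d → ℤ)) (s : ∀ j, Option (σf j)) (b : Bool) :
    ((bigDFA σf Mf).evalFrom (s, some b) w).2 = some b := by
  induction w generalizing s with
  | nil => rfl
  | cons a t ih => exact ih _

lemma bigDFA_evalFrom_snd_cons (b : Fin d → ℤ) (t : List (Fin d → ℤ))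
    (s : ∀ j, Option (σf j)) :
    ((bigDFA σf Mf).evalFrom (s, none) (b :: t)).2
      = some (if ∃ j, b j ≠ 0 then true else false) := by
  show ((bigDFA σf Mf).evalFrom ((bigDFA σf Mf).step (s, none) b) t).2 = _
  exact bigDFA_evalFrom_snd_some σf Mf t _ _

lemma bigDFA_spec (Ns : Fin d → NumSys)
    (hM : ∀ j, (Mf j).accepts = {w : List ℤ | ∃ n : ℕ, repU (Ns j) n = w})
    (w : List (Fin d → ℤ)) :
    ((bigDFA σf Mf).eval w ∈ (bigDFA σf Mf).accept
      ↔ w = repVec Ns (fun j => (valU (Ns j) (comp w j)).toNat)) := by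
  rw [repVec_char]
  have hmem : ((bigDFA σf Mf).eval w ∈ (bigDFA σf Mf).accept)
      ↔ ((∀ j, ((bigDFA σf Mf).eval w).1 j ∈ (stripDFA (Mf j)).accept)
        ∧ ((bigDFA σf Mf).eval w).2 ≠ some false) := Iff.rfl
  rw [hmem]
  have hfst : ∀ j, (((bigDFA σf Mf).eval w).1 j ∈ (stripDFA (Mf j)).accept
      ↔ ∃ k m, comp w j = List.replicate k 0 ++ repU (Ns j) m) := by
    intro j
    show ((bigDFA σf Mf).evalFrom ((fun _ => none), none) w).1 j ∈ _ ↔ _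
    rw [bigDFA_evalFrom_fst]
    exact stripDFA_accepts (Ns j) (Mf j) (hM j) (comp w j)
  constructor
  · rintro ⟨h1, h2⟩
    refine ⟨fun j => (hfst j).mp (h1 j), ?_⟩
    rcases w with _ | ⟨b, t⟩
    · exact Or.inl rfl
    · right
      have := bigDFA_evalFrom_snd_cons σf Mf b t (fun _ => none)
      show ∃ j, b j ≠ 0
      rw [show (bigDFA σf Mf).eval (b :: t)
          = (bigDFA σf Mf).evalFrom ((fun _ => none), none) (b :: t) from rfl, this] at h2
      by_contra hno
      rw [if_neg hno] at h2
      exact h2 rfl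
  · rintro ⟨h1, h2⟩
    refine ⟨fun j => (hfst j).mpr (h1 j), ?_⟩
    rcases w with _ | ⟨b, t⟩
    · show ((bigDFA σf Mf).evalFrom ((fun _ => none), none) []).2 ≠ some false
      simp [DFA.evalFrom_nil]
    · have hb : ∃ j, b j ≠ 0 := by
        rcases h2 with h2 | ⟨j, hj⟩
        · exact absurd h2 (by simp)
        · exact ⟨j, hj⟩
      have := bigDFA_evalFrom_snd_cons σf Mf b t (fun _ => none)
      show ((bigDFA σf Mf).evalFrom ((fun _ => none), none) (b :: t)).2 ≠ some false
      rw [this, if_pos hb]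
      simp

end BigDFA
section Hadamard

variable {K : Type} [Semiring K] {α : Type}

lemma KRecOn_hadamard {A : Set α} {S : List α → K} (hS : KRecOn A S)
    {σ : Type} [Fintype σ] (M : DFA α σ) :
    KRecOn A (fun w => if M.eval w ∈ M.accept then S w else 0) := by
  classical
  obtain ⟨r, hr, lam, mu, gam, hrec⟩ := hS
  set mu' : α → Matrix (Fin r × σ) (Fin r × σ) K :=
    fun a p q => if q.2 = M.step p.2 a then mu a p.1 q.1 else 0 with hmu'
  set lam' : Matrix (Fin 1) (Fin r × σ) K :=
    fun z p => if p.2 = M.start then lam z p.1 else 0 with hlam'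
  set gam' : Matrix (Fin r × σ) (Fin 1) K :=
    fun p z => if p.2 ∈ M.accept then gam p.1 z else 0 with hgam'
  have key : ∀ (w : List α) (p q : Fin r × σ),
      ((w.map mu').prod) p q
        = if q.2 = M.evalFrom p.2 w then ((w.map mu).prod) p.1 q.1 else 0 := by
    intro w
    induction w with
    | nil =>
      intro p q
      simp only [List.map_nil, List.prod_nil, DFA.evalFrom_nil]
      rcases p with ⟨p1, p2⟩
      rcases q with ⟨q1, q2⟩
      by_cases h2 : q2 = p2
      · subst h2
        rw [if_pos rfl, Matrix.one_apply, Matrix.one_apply]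
        by_cases h1 : p1 = q1 <;> simp [h1, Prod.ext_iff]
      · rw [if_neg h2, Matrix.one_apply,
          if_neg (fun hh => h2 (congrArg Prod.snd hh).symm)]
    | cons a t ih =>
      intro p q
      simp only [List.map_cons, List.prod_cons]
      rw [Matrix.mul_apply, Fintype.sum_prod_type]
      have step1 : ∀ i : Fin r, ∑ s : σ, mu' a p (i, s) * ((t.map mu').prod) (i, s) q
          = mu a p.1 i * ((t.map mu').prod) (i, M.step p.2 a) q := by
        intro i
        rw [Finset.sum_eq_single (M.step p.2 a)]
        · simp [hmu']
        · intro s _ hs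
          simp [hmu', hs]
        · intro h
          exact absurd (Finset.mem_univ _) h
      rw [Finset.sum_congr rfl fun i _ => step1 i]
      have heval : M.evalFrom p.2 (a :: t) = M.evalFrom (M.step p.2 a) t := rfl
      rw [heval]
      by_cases hq : q.2 = M.evalFrom (M.step p.2 a) t
      · rw [if_pos hq, Matrix.mul_apply]
        apply Finset.sum_congr rfl
        intro i _
        rw [ih (i, M.step p.2 a) q, if_pos hq]
      · rw [if_neg hq]
        apply Finset.sum_eq_zero
        intro i _
        rw [ih (i, M.step p.2 a) q, if_neg hq, mul_zero]
  have hlp : ∀ (w : List α) (q : Fin r × σ), (lam' * (w.map mu').prod) 0 q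
      = if q.2 = M.eval w then (lam * (w.map mu).prod) 0 q.1 else 0 := by
    intro w q
    rw [Matrix.mul_apply, Fintype.sum_prod_type]
    have step1 : ∀ i : Fin r, ∑ s : σ, lam' 0 (i, s) * ((w.map mu').prod) (i, s) q
        = lam 0 i * ((w.map mu').prod) (i, M.start) q := by
      intro i
      rw [Finset.sum_eq_single M.start]
      · simp [hlam']
      · intro s _ hs
        simp [hlam', hs]
      · intro h
        exact absurd (Finset.mem_univ _) h
    rw [Finset.sum_congr rfl fun i _ => step1 i]
    by_cases hq : q.2 = M.eval w
    · have hq' : ∀ i : Fin r, q.2 = M.evalFrom (i, M.start).2 w := fun _ => hq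
      rw [if_pos hq, Matrix.mul_apply]
      apply Finset.sum_congr rfl
      intro i _
      rw [key w (i, M.start) q, if_pos (hq' i)]
    · have hq' : ∀ i : Fin r, ¬ q.2 = M.evalFrom (i, M.start).2 w := fun _ => hq
      rw [if_neg hq]
      apply Finset.sum_eq_zero
      intro i _
      rw [key w (i, M.start) q, if_neg (hq' i), mul_zero]
  have final : ∀ w : List α, (lam' * (w.map mu').prod * gam') 0 0
      = if M.eval w ∈ M.accept then (lam * (w.map mu).prod * gam) 0 0 else 0 := by
    intro w
    rw [Matrix.mul_apply, Fintype.sum_prod_type]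
    have step1 : ∀ i : Fin r, ∑ s : σ, (lam' * (w.map mu').prod) 0 (i, s) * gam' (i, s) 0
        = (lam * (w.map mu).prod) 0 i * (if M.eval w ∈ M.accept then gam i 0 else 0) := by
      intro i
      rw [Finset.sum_eq_single (M.eval w)]
      · rw [hlp w (i, M.eval w)]
        simp [hgam']
      · intro s _ hs
        rw [hlp w (i, s)]
        simp [hs]
      · intro h
        exact absurd (Finset.mem_univ _) h
    rw [Finset.sum_congr rfl fun i _ => step1 i]
    by_cases hacc : M.eval w ∈ M.accept
    · simp only [if_pos hacc]
      rw [Matrix.mul_apply]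
    · simp only [if_neg hacc, mul_zero]
      rw [Finset.sum_const_zero]
  -- transport along an equivalence with `Fin (card (Fin r × σ))`
  set e := Fintype.equivFin (Fin r × σ) with he
  refine ⟨Fintype.card (Fin r × σ),
    Fintype.card_pos_iff.mpr ⟨(⟨0, hr⟩, M.start)⟩,
    lam'.submatrix id e.symm, fun a => (mu' a).submatrix e.symm e.symm,
    gam'.submatrix e.symm id, ?_⟩
  intro w hw
  have hprod : ((w.map fun a => (mu' a).submatrix e.symm e.symm).prod)
      = ((w.map mu').prod).submatrix e.symm e.symm := by
    induction w with
    | nil => simp [Matrix.submatrix_one_equiv]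
    | cons a t ih =>
      simp only [List.map_cons, List.prod_cons, ih (fun x hx => hw x (List.mem_cons_of_mem a hx))]
      exact Matrix.submatrix_mul_equiv (mu' a) (List.map mu' t).prod _ e.symm _
  rw [hprod, Matrix.submatrix_mul_equiv, Matrix.submatrix_mul_equiv]
  have : (lam' * (w.map mu').prod * gam').submatrix (id : Fin 1 → Fin 1) (id : Fin 1 → Fin 1) 0 0
      = (lam' * (w.map mu').prod * gam') 0 0 := rfl
  rw [this, final w]
  show (if M.eval w ∈ M.accept then S w else 0) = _
  by_cases hacc : M.eval w ∈ M.accept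
  · rw [if_pos hacc, if_pos hacc, hrec w hw]
  · rw [if_neg hacc, if_neg hacc]

end Hadamard
set_option maxHeartbeats 1000000 in
/-- Let `U = (U_1, …, U_d)` be a `d`-tuple of numeration systems whose numeration
languages `rep_{U_j}(ℕ)` are all regular, and let `K` be a semiring.  If there is a
`K`-recognizable series `S` over `A_U` such that `(S, rep_U(n)) = f(n)` for every
`n ∈ ℕ^d`, then `f` is `(U,K)`-regular, i.e. `Σ_{n ∈ ℕ^d} f(n) rep_U(n)` is
`K`-recognizable. -/
theorem recognizable_series_implies_regular {d : ℕ} (Ns : Fin d → NumSys)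
    (hlang : ∀ j, Language.IsRegular
      ({w : List ℤ | ∃ n : ℕ, repU (Ns j) n = w} : Language ℤ))
    {K : Type} [Semiring K] (f : (Fin d → ℕ) → K)
    (hS : ∃ S : List (Fin d → ℤ) → K, KRecOn (alphProd Ns) S ∧
      ∀ n : Fin d → ℕ, S (repVec Ns n) = f n) :
    KRecOn (alphProd Ns) (seriesG Ns f) := by
  obtain ⟨S, hSrec, hSf⟩ := hS
  choose σf instf Mf hMf using hlang
  haveI : ∀ j, Fintype (σf j) := instf
  obtain ⟨r, hr, lam, mu, gam, hrec⟩ :=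
    KRecOn_hadamard hSrec (bigDFA σf Mf)
  refine ⟨r, hr, lam, mu, gam, ?_⟩
  intro w hw
  rw [← hrec w hw]
  simp only [seriesG]
  by_cases hrep : w = repVec Ns (fun j => (valU (Ns j) (comp w j)).toNat)
  · rw [if_pos hrep, if_pos ((bigDFA_spec σf Mf Ns hMf w).mpr hrep)]
    have h2 := hSf (fun j => (valU (Ns j) (comp w j)).toNat)
    rw [← hrep] at h2
    exact h2.symm
  · rw [if_neg hrep, if_neg (fun hacc => hrep ((bigDFA_spec σf Mf Ns hMf w).mp hacc))]
end

section
/- Let b ≥ 2 be an integer, K a semiring, and f : ℕ → K. Then the series Σ_{n∈ℕ} f(n) rep_b(n) (over the base-b expansions of the natural numbers) is K-recognizable if and only if the series Σ_{w∈{0,1,…,b−1}*} f(val_b(w)) w is K-recognizable. -/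
open scoped Classical

open Matrix

theorem List.head?_dropWhile_ne_some {α : Type} [DecidableEq α] (z : α) (w : List α) :
    (w.dropWhile (· = z)).head? ≠ some z := by
  have := List.head?_dropWhile_not (· = z) w
  intro h
  simp [h] at this

section BlockMatrices

variable {K : Type} [Semiring K] {ι : Type} [Fintype ι]

theorem fromCols_zero_mul_fromBlocks_mul_fromRows {m n : Type} (lam : Matrix m ι K)
    (P Q R T : Matrix ι ι K) (gam : Matrix ι n K) :
    fromCols lam (0 : Matrix m ι K) * fromBlocks P Q R T * fromRows gam gam =
      lam * P * gam + lam * Q * gam := by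
  simp [fromCols_mul_fromBlocks, fromCols_mul_fromRows]

variable [DecidableEq ι] {α : Type} [DecidableEq α] (z : α) (mu : α → Matrix ι ι K)

/-- Transitions of an automaton that reads the leading letters `z` in the first copy of the
states without acting, and runs `mu` in the second copy from the first other letter on. -/
def stripMatrix (a : α) : Matrix (ι ⊕ ι) (ι ⊕ ι) K :=
  if a = z then fromBlocks 1 0 0 (mu a) else fromBlocks 0 (mu a) 0 (mu a)

theorem prod_map_stripMatrix (w : List α) :
    (w.map (stripMatrix z mu)).prod =
      fromBlocks (if w.dropWhile (· = z) = [] then 1 else 0)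
        (if w.dropWhile (· = z) = [] then 0 else ((w.dropWhile (· = z)).map mu).prod)
        0 (w.map mu).prod := by
  induction w with
  | nil => simp
  | cons a v ih =>
    rw [List.map_cons, List.prod_cons, ih, stripMatrix]
    by_cases ha : a = z <;> simp [ha, fromBlocks_multiply]

/-- Transitions of an automaton that runs `mu` in the second copy of the states, entered only
through a first letter other than `z`. -/
def headFilterMatrix (a : α) : Matrix (ι ⊕ ι) (ι ⊕ ι) K :=
  fromBlocks 0 (if a = z then 0 else mu a) 0 (mu a)

theorem prod_map_headFilterMatrix (a : α) (v : List α) :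
    ((a :: v).map (headFilterMatrix z mu)).prod =
      fromBlocks 0 (if a = z then 0 else ((a :: v).map mu).prod) 0 ((a :: v).map mu).prod := by
  induction v generalizing a with
  | nil => simp [headFilterMatrix]
  | cons c v ih =>
    rw [List.map_cons, List.prod_cons, ih, headFilterMatrix, fromBlocks_multiply]
    by_cases ha : a = z <;> simp [ha]

end BlockMatrices

namespace KRecOn

variable {K : Type} [Semiring K] {α : Type} {A : Set α} {S : List α → K}

theorem congr {S' : List α → K} (h : KRecOn A S)
    (hS : ∀ w : List α, (∀ x ∈ w, x ∈ A) → S w = S' w) : KRecOn A S' := by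
  obtain ⟨r, hr, lam, mu, gam, h⟩ := h
  exact ⟨r, hr, lam, mu, gam, fun w hw => (hS w hw).symm.trans (h w hw)⟩

theorem of_fintype {ι : Type} [Fintype ι] [DecidableEq ι] (lam : Matrix (Fin 1) ι K)
    (mu : α → Matrix ι ι K) (gam : Matrix ι (Fin 1) K)
    (h : ∀ w : List α, (∀ x ∈ w, x ∈ A) → S w = (lam * (w.map mu).prod * gam) 0 0) :
    KRecOn A S := by
  cases isEmpty_or_nonempty ι with
  | inl hι =>
    -- over an empty state set every value `λ μ(w) γ` is an empty sum
    refine ⟨1, one_pos, 0, 0, 0, fun w hw => ?_⟩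
    simp [h w hw, mul_apply]
  | inr hι =>
    let e := reindexRingEquiv K (Fintype.equivFin ι)
    refine ⟨Fintype.card ι, Fintype.card_pos, lam.submatrix id (Fintype.equivFin ι).symm,
      fun a => e (mu a), gam.submatrix (Fintype.equivFin ι).symm id, fun w hw => ?_⟩
    have hprod : (w.map fun a => e (mu a)).prod = e (w.map mu).prod := by
      rw [map_list_prod, List.map_map]; rfl
    rw [h w hw, hprod]
    simp [e, submatrix_mul_equiv]

variable [DecidableEq α]

theorem comp_dropWhile (h : KRecOn A S) (z : α) :
    KRecOn A (fun w => S (w.dropWhile (· = z))) := by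
  obtain ⟨r, -, lam, mu, gam, h⟩ := h
  refine of_fintype (fromCols lam 0) (stripMatrix z mu) (fromRows gam gam) fun w hw => ?_
  rw [prod_map_stripMatrix, fromCols_zero_mul_fromBlocks_mul_fromRows]
  by_cases hd : w.dropWhile (· = z) = []
  · simp [hd, h [] (by simp)]
  · simp [hd, h _ fun x hx => hw x (List.dropWhile_subset _ hx)]

theorem ite_head? (h : KRecOn A S) (z : α) :
    KRecOn A (fun w => if w.head? = some z then 0 else S w) := by
  obtain ⟨r, -, lam, mu, gam, h⟩ := h
  refine of_fintype (fromCols lam 0) (headFilterMatrix z mu) (fromRows gam gam) fun w hw => ?_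
  cases w with
  | nil =>
    rw [List.map_nil, List.prod_nil, ← fromBlocks_one, fromCols_zero_mul_fromBlocks_mul_fromRows]
    simp [h [] (by simp)]
  | cons a v =>
    rw [prod_map_headFilterMatrix, fromCols_zero_mul_fromBlocks_mul_fromRows]
    by_cases ha : a = z <;> simp [ha, h _ hw]

end KRecOn

namespace Nat

theorem ofDigits_reverse_dropWhile_zero (b : ℕ) (w : List ℕ) :
    ofDigits b (w.dropWhile (· = 0)).reverse = ofDigits b w.reverse := by
  induction w with
  | nil => rfl
  | cons a v ih =>
    by_cases ha : a = 0 <;> simp [ha, ih]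

theorem head?_reverse_digits_ne_zero (b n : ℕ) : (digits b n).reverse.head? ≠ some 0 := by
  rw [List.head?_reverse]
  rcases eq_or_ne n 0 with rfl | hn
  · simp
  · rw [List.getLast?_eq_some_getLast (digits_ne_nil_iff_ne_zero.mpr hn), Ne, Option.some_inj]
    exact getLast_digit_ne_zero b hn

theorem reverse_digits_ofDigits_reverse_eq_iff {b : ℕ} (hb : 1 < b) {w : List ℕ}
    (hw : ∀ x ∈ w, x < b) :
    (digits b (ofDigits b w.reverse)).reverse = w ↔ w.head? ≠ some 0 := by
  refine ⟨fun h => h ▸ head?_reverse_digits_ne_zero _ _, fun hhead => ?_⟩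
  rw [digits_ofDigits b hb _ (fun x hx => hw x (List.mem_reverse.mp hx)), List.reverse_reverse]
  intro hne
  rw [List.getLast_reverse]
  exact fun h0 => hhead (h0 ▸ List.head?_eq_some_head _)

end Nat

/-- For an integer base `b ≥ 2`, a semiring `K` and `f : ℕ → K`, the series
`Σ_{n ∈ ℕ} f(n) rep_b(n)` (supported on the base-`b` expansions of the natural
numbers) is `K`-recognizable if and only if the series
`Σ_{w ∈ {0,…,b-1}*} f(val_b(w)) w` is `K`-recognizable. -/
theorem base_b_regular_iff {K : Type} [Semiring K] (b : ℕ) (hb : 2 ≤ b)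
    (f : ℕ → K) :
    KRecOn {a : ℕ | a < b}
      (fun w : List ℕ =>
        if (Nat.digits b (Nat.ofDigits b w.reverse)).reverse = w then
          f (Nat.ofDigits b w.reverse)
        else 0) ↔
    KRecOn {a : ℕ | a < b} (fun w : List ℕ => f (Nat.ofDigits b w.reverse)) := by
  constructor
  · intro h
    refine (h.comp_dropWhile 0).congr fun w hw => ?_
    have hcanon := (Nat.reverse_digits_ofDigits_reverse_eq_iff hb
      fun x hx => hw x (List.dropWhile_subset _ hx)).mpr (List.head?_dropWhile_ne_some 0 w)
    rw [if_pos hcanon, Nat.ofDigits_reverse_dropWhile_zero]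
  · intro h
    refine (h.ite_head? 0).congr fun w hw => ?_
    simp only [Nat.reverse_digits_ofDigits_reverse_eq_iff hb hw, ite_not]
end
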